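/- Let n > 1. For every open neighborhood U ⊂ ℝⁿ of the unit sphere S^{n−1} = {p ∈ ℝⁿ : |p| = 1}, there exist δ ∈ (0,1) and a smooth embedding h : D^{n−1} → ℝⁿ of the closed unit disk D^{n−1} ⊂ ℝ^{n−1}, with image contained in U, such that, writing ℝⁿ = ℝ^{n−1} × ℝ: (i) h(∂D^{n−1}) = {(y,0) : |y| = 1} = S^{n−2} × {0}, the cusp equator of the standard wrinkle; (ii) h maps the annulus {v : 1−δ ≤ |v| ≤ 1} onto the annulus {(y,0) : 1 ≤ |y| ≤ 1+δ} ⊂ ℝ^{n−1} × {0}; and (iii) h({v : |v| < 1}) does not intersect the unit sphere S^{n−1}. -/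

import Mathlib

/-!
The disk is a radial map `h v = (A(‖v‖²) • v, B(‖v‖²))`. Let `m` be a smooth function, positive
on `[0, ∞)` and equal to `t` for `t ≥ a²`, and `R` a smooth strictly decreasing function with
`R(a²) = 1 + δ`, `R(1) = 1` and `R' < 0`. Then `h v` is `R(‖v‖²)` times the inverse stereographic
image of `v / √m(‖v‖²)`, so `h v` lies on the sphere of radius `R(‖v‖²)`: it misses the unit
sphere for `‖v‖ < 1`, stays close to it when `δ` is small, and, `R` being injective, two points
with the same image have the same norm, which makes `h` injective. For `‖v‖ ≥ a` the vector
`v / √m` is a unit vector, which goes to the equator: this is the flat annulus. Finally, `R' ≠ 0`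
forces the profile curve `ρ ↦ (ρ A(ρ²), B(ρ²))` to be regular, so `h` is an immersion.
-/

open Metric Set Function Filter Topology

section RadialMap

variable {X : Type*} [NormedAddCommGroup X] [InnerProductSpace ℝ X] {A B : ℝ → ℝ}

def radialMap (A B : ℝ → ℝ) (v : X) : X × ℝ := (A (‖v‖ ^ 2) • v, B (‖v‖ ^ 2))

theorem contDiff_radialMap {n : WithTop ℕ∞} (hA : ∀ t, 0 ≤ t → ContDiffAt ℝ n A t)
    (hB : ∀ t, 0 ≤ t → ContDiffAt ℝ n B t) : ContDiff ℝ n (radialMap A B : X → X × ℝ) := by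
  refine contDiff_iff_contDiffAt.2 fun v => ?_
  have hq : ContDiffAt ℝ n (fun w : X => ‖w‖ ^ 2) v := (contDiff_norm_sq ℝ).contDiffAt
  have ht : 0 ≤ ‖v‖ ^ 2 := by positivity
  exact (((hA _ ht).comp v hq).smul contDiffAt_id).prodMk ((hB _ ht).comp v hq)

theorem hasFDerivAt_radialMap {a' b' : ℝ} {v : X} (hA : HasDerivAt A a' (‖v‖ ^ 2))
    (hB : HasDerivAt B b' (‖v‖ ^ 2)) :
    HasFDerivAt (radialMap A B)
      ((A (‖v‖ ^ 2) • ContinuousLinearMap.id ℝ X + (a' • 2 • innerSL ℝ v).smulRight v).prod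
        (b' • 2 • innerSL ℝ v)) v := by
  have hq := (hasStrictFDerivAt_norm_sq v).hasFDerivAt
  exact ((hA.comp_hasFDerivAt v hq).smul (hasFDerivAt_id v)).prodMk (hB.comp_hasFDerivAt v hq)

/-- `hreg` says that the profile curve `ρ ↦ (ρ A(ρ²), B(ρ²))` is regular at `ρ = ‖v‖`. -/
theorem injective_fderiv_radialMap {a' b' : ℝ} {v : X} (hA : HasDerivAt A a' (‖v‖ ^ 2))
    (hB : HasDerivAt B b' (‖v‖ ^ 2)) (hA0 : A (‖v‖ ^ 2) ≠ 0)
    (hreg : A (‖v‖ ^ 2) + 2 * ‖v‖ ^ 2 * a' ≠ 0 ∨ b' ≠ 0) :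
    Injective (fderiv ℝ (radialMap A B) v) := by
  rw [(hasFDerivAt_radialMap hA hB).fderiv, injective_iff_map_eq_zero]
  intro u hu
  simp only [ContinuousLinearMap.prod_apply, _root_.add_apply, _root_.smul_apply,
    ContinuousLinearMap.id_apply, ContinuousLinearMap.smulRight_apply, innerSL_apply_apply,
    smul_eq_mul, nsmul_eq_mul, Nat.cast_ofNat, Prod.mk_eq_zero] at hu
  obtain ⟨h1, h2⟩ := hu
  have hc : inner ℝ v u = 0 := by
    have hpair := congrArg (inner ℝ v) h1
    simp only [inner_add_right, real_inner_smul_right, real_inner_self_eq_norm_sq,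
      inner_zero_right] at hpair
    rcases hreg with h | h
    · exact (mul_eq_zero.1 (by linear_combination hpair)).resolve_right h
    · simpa [h] using h2
  simpa [hc, hA0] using h1

theorem sq_norm_radialMap (v : X) :
    ‖(radialMap A B v).1‖ ^ 2 + (radialMap A B v).2 ^ 2 =
      ‖v‖ ^ 2 * A (‖v‖ ^ 2) ^ 2 + B (‖v‖ ^ 2) ^ 2 := by
  simp only [radialMap, norm_smul, Real.norm_eq_abs, mul_pow, sq_abs]
  ring

theorem injOn_radialMap {s : Set ℝ} (hA : ∀ t ∈ s, A t ≠ 0)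
    (hN : InjOn (fun t => t * A t ^ 2 + B t ^ 2) s) :
    InjOn (radialMap A B : X → X × ℝ) ((fun v => ‖v‖ ^ 2) ⁻¹' s) := by
  intro v hv w hw hvw
  have hnorm : ‖v‖ ^ 2 = ‖w‖ ^ 2 := by
    refine hN hv hw ?_
    have h := congrArg (fun p : X × ℝ => ‖p.1‖ ^ 2 + p.2 ^ 2) hvw
    rwa [sq_norm_radialMap, sq_norm_radialMap] at h
  have h1 := congrArg Prod.fst hvw
  simp only [radialMap, hnorm] at h1
  exact smul_right_injective X (hA _ hw) h1

theorem radial_regular_of_mul_sq_add_sq_eventuallyEq {A B R : ℝ → ℝ} {a' b' r' t : ℝ}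
    (hA : HasDerivAt A a' t) (hB : HasDerivAt B b' t) (hR : HasDerivAt R r' t)
    (hN : (fun s => s * A s ^ 2 + B s ^ 2) =ᶠ[𝓝 t] fun s => R s ^ 2) (hRr : R t * r' ≠ 0) :
    A t + 2 * t * a' ≠ 0 ∨ b' ≠ 0 := by
  have hderiv := ((((hasDerivAt_id t).mul (hA.pow 2)).add (hB.pow 2)).congr_of_eventuallyEq
    hN.symm).unique (hR.pow 2)
  by_contra! h
  apply hRr
  simp only [id, Pi.pow_apply, Nat.cast_ofNat, Nat.add_one_sub_one, pow_one, one_mul] at hderiv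
  linear_combination (-1 / 2) * hderiv + (1 / 2) * A t * h.1 + B t * h.2

end RadialMap

theorem image_smul_div_norm_annulus {X : Type*} [NormedAddCommGroup X] [NormedSpace ℝ X]
    {g : ℝ → ℝ} {r₁ r₂ : ℝ} (hr₁ : 0 < r₁) (hr : r₁ ≤ r₂) (hg : ContinuousOn g (Icc r₁ r₂))
    (hanti : AntitoneOn g (Icc r₁ r₂)) (hg₂ : 0 < g r₂) :
    (fun v : X => (g ‖v‖ / ‖v‖) • v) '' {v | r₁ ≤ ‖v‖ ∧ ‖v‖ ≤ r₂} =
      {y | g r₂ ≤ ‖y‖ ∧ ‖y‖ ≤ g r₁} := by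
  ext y
  constructor
  · rintro ⟨v, ⟨h₁, h₂⟩, rfl⟩
    have hv : 0 < ‖v‖ := hr₁.trans_le h₁
    have hgv : g r₂ ≤ g ‖v‖ := hanti ⟨h₁, h₂⟩ ⟨hr, le_rfl⟩ h₂
    rw [mem_ofPred_eq, norm_smul, Real.norm_eq_abs, abs_of_pos (div_pos (hg₂.trans_le hgv) hv),
      div_mul_cancel₀ _ hv.ne']
    exact ⟨hgv, hanti ⟨le_rfl, hr⟩ ⟨h₁, h₂⟩ h₁⟩
  · rintro ⟨h₁, h₂⟩
    obtain ⟨ρ, hρ, hgρ⟩ := intermediate_value_Icc' hr hg ⟨h₁, h₂⟩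
    have hy : 0 < ‖y‖ := hg₂.trans_le h₁
    have hnorm : ‖(ρ / ‖y‖) • y‖ = ρ := by
      rw [norm_smul, Real.norm_eq_abs, abs_of_pos (div_pos (hr₁.trans_le hρ.1) hy),
        div_mul_cancel₀ _ hy.ne']
    refine ⟨(ρ / ‖y‖) • y, by rw [mem_ofPred_eq, hnorm]; exact hρ, ?_⟩
    have hρ₀ : ρ ≠ 0 := (hr₁.trans_le hρ.1).ne'
    have hcancel : ‖y‖ / ρ * (ρ / ‖y‖) = 1 := by field_simp
    dsimp only
    rw [hnorm, hgρ, smul_smul, hcancel, one_smul]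

theorem IsCompact.exists_pos_forall_smul_mem {E : Type*} [NormedAddCommGroup E]
    [NormedSpace ℝ E] {K U : Set E} (hK : IsCompact K) (hU : IsOpen U) (hKU : K ⊆ U) :
    ∃ ε > 0, ∀ p ∈ K, ∀ c : ℝ, |c - 1| < ε → c • p ∈ U := by
  obtain ⟨r, hr, hrU⟩ := hK.exists_thickening_subset_open hU hKU
  obtain ⟨M, hM, hKM⟩ := hK.isBounded.exists_pos_norm_le
  refine ⟨r / M, div_pos hr hM, fun p hp c hc => hrU (mem_thickening_iff.2 ⟨p, hp, ?_⟩)⟩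
  calc dist (c • p) p = |c - 1| * ‖p‖ := by
        rw [dist_eq_norm, ← Real.norm_eq_abs, ← norm_smul, sub_smul, one_smul]
    _ ≤ |c - 1| * M := by gcongr; exact hKM p hp
    _ < r / M * M := by gcongr
    _ = r := div_mul_cancel₀ r hM.ne'

theorem isCompact_unitSphere_prod {X : Type*} [NormedAddCommGroup X] [NormedSpace ℝ X]
    [ProperSpace X] : IsCompact {p : X × ℝ | ‖p.1‖ ^ 2 + p.2 ^ 2 = 1} := by
  refine isCompact_of_isClosed_isBounded
    (isClosed_eq (by fun_prop) continuous_const)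
    ((isBounded_closedBall (x := 0) (r := 1)).subset ?_)
  intro p hp
  rw [mem_ofPred_eq] at hp
  rw [mem_closedBall_zero_iff, Prod.norm_def, Real.norm_eq_abs, max_le_iff, abs_le]
  refine ⟨?_, ?_, ?_⟩ <;> nlinarith [norm_nonneg p.1, sq_nonneg p.2, sq_nonneg ‖p.1‖]

theorem exists_pos_forall_mem_of_unitSphere_subset {X : Type*} [NormedAddCommGroup X]
    [NormedSpace ℝ X] [ProperSpace X] {U : Set (X × ℝ)} (hU : IsOpen U)
    (hSU : {p : X × ℝ | ‖p.1‖ ^ 2 + p.2 ^ 2 = 1} ⊆ U) :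
    ∃ ε > 0, ∀ (c : ℝ) (p : X × ℝ), 1 ≤ c → c < 1 + ε →
      ‖p.1‖ ^ 2 + p.2 ^ 2 = c ^ 2 → p ∈ U := by
  obtain ⟨ε, hε, hεU⟩ := isCompact_unitSphere_prod.exists_pos_forall_smul_mem hU hSU
  refine ⟨ε, hε, fun c p hc1 hcε hp => ?_⟩
  have hc0 : c ≠ 0 := by positivity
  rw [← smul_inv_smul₀ hc0 p]
  refine hεU _ ?_ c (abs_sub_lt_iff.2 ⟨by linarith, by linarith⟩)
  simp only [mem_ofPred_eq, Prod.smul_fst, Prod.smul_snd, norm_smul, smul_eq_mul, mul_pow,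
    Real.norm_eq_abs, sq_abs, ← mul_add, hp]
  field_simp

noncomputable section CuspDisk

def cuspNormalizer (a t : ℝ) : ℝ := t + expNegInvGlue (a ^ 2 - t)

/-- Any smooth `R` with `R' < 0`, `R(a²) = 1 + δ`, `R(1) = 1` and `R < 1 + 2δ` would do; the
exponential keeps `R` bounded on `[0, a²]` although `R(a²) - R(1) = δ` while `1 - a²` is small. -/
def cuspRadius (δ a t : ℝ) : ℝ := 1 + δ * (2 - 2 ^ ((t - a ^ 2) / (1 - a ^ 2)))

def cuspDiskCoeff (δ a t : ℝ) : ℝ :=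
  2 * cuspRadius δ a t * √(cuspNormalizer a t) / (t + cuspNormalizer a t)

def cuspDiskHeight (δ a t : ℝ) : ℝ :=
  cuspRadius δ a t * (t - cuspNormalizer a t) / (t + cuspNormalizer a t)

variable {X : Type*} [NormedAddCommGroup X] [InnerProductSpace ℝ X] {δ a t : ℝ}

theorem cuspNormalizer_pos (ha : a ≠ 0) (ht : 0 ≤ t) : 0 < cuspNormalizer a t := by
  rw [cuspNormalizer]
  rcases lt_or_ge t (a ^ 2) with h | h
  · linarith [expNegInvGlue.pos_of_pos (sub_pos.2 h)]
  · linarith [expNegInvGlue.nonneg (a ^ 2 - t), (by positivity : 0 < a ^ 2)]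

theorem cuspNormalizer_of_sq_le (h : a ^ 2 ≤ t) : cuspNormalizer a t = t := by
  rw [cuspNormalizer, expNegInvGlue.zero_of_nonpos (sub_nonpos.2 h), add_zero]

theorem contDiff_cuspNormalizer {n : ℕ∞} : ContDiff ℝ n (cuspNormalizer a) :=
  contDiff_id.add (expNegInvGlue.contDiff.comp (contDiff_const.sub contDiff_id))

theorem contDiff_cuspRadius {n : ℕ∞} : ContDiff ℝ n (cuspRadius δ a) :=
  contDiff_const.add (contDiff_const.mul (contDiff_const.sub
    (contDiff_const.rpow ((contDiff_id.sub contDiff_const).div_const _) fun _ => two_ne_zero)))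

theorem cuspRadius_sq_self : cuspRadius δ a (a ^ 2) = 1 + δ := by
  norm_num [cuspRadius]

theorem cuspRadius_one (ha : a ^ 2 < 1) : cuspRadius δ a 1 = 1 := by
  simp [cuspRadius, div_self (sub_pos.2 ha).ne']

theorem hasDerivAt_cuspRadius :
    HasDerivAt (cuspRadius δ a)
      (-(δ * 2 ^ ((t - a ^ 2) / (1 - a ^ 2)) * Real.log 2 / (1 - a ^ 2))) t := by
  have hx : HasDerivAt (fun s => (s - a ^ 2) / (1 - a ^ 2)) (1 / (1 - a ^ 2)) t :=
    ((hasDerivAt_id t).sub_const _).div_const _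
  have hpow := (Real.hasStrictDerivAt_const_rpow two_pos _).hasDerivAt.comp t hx
  exact (((hpow.const_sub 2).const_mul δ).const_add 1).congr_deriv (by ring)

theorem deriv_cuspRadius_neg (hδ : 0 < δ) (ha : a ^ 2 < 1) : deriv (cuspRadius δ a) t < 0 := by
  have : 0 < 1 - a ^ 2 := sub_pos.2 ha
  have : 0 < Real.log 2 := Real.log_pos one_lt_two
  have : 0 < (2 : ℝ) ^ ((t - a ^ 2) / (1 - a ^ 2)) := Real.rpow_pos_of_pos two_pos _
  rw [hasDerivAt_cuspRadius.deriv, neg_lt_zero]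
  positivity

theorem cuspRadius_strictAnti (hδ : 0 < δ) (ha : a ^ 2 < 1) : StrictAnti (cuspRadius δ a) := by
  intro s t hst
  have hexp : (s - a ^ 2) / (1 - a ^ 2) < (t - a ^ 2) / (1 - a ^ 2) := by gcongr
  have := Real.rpow_lt_rpow_of_exponent_lt one_lt_two hexp
  simp only [cuspRadius]
  nlinarith

theorem one_le_cuspRadius (hδ : 0 < δ) (ha : a ^ 2 < 1) (ht : t ≤ 1) :
    1 ≤ cuspRadius δ a t :=
  cuspRadius_one (δ := δ) ha ▸ (cuspRadius_strictAnti hδ ha).antitone ht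

theorem one_lt_cuspRadius (hδ : 0 < δ) (ha : a ^ 2 < 1) (ht : t < 1) :
    1 < cuspRadius δ a t :=
  cuspRadius_one (δ := δ) ha ▸ cuspRadius_strictAnti hδ ha ht

theorem cuspRadius_lt (hδ : 0 < δ) : cuspRadius δ a t < 1 + 2 * δ := by
  have := Real.rpow_pos_of_pos two_pos ((t - a ^ 2) / (1 - a ^ 2))
  simp only [cuspRadius]
  nlinarith

theorem mul_sq_cuspDiskCoeff_add_sq_cuspDiskHeight (ha : a ≠ 0) (ht : 0 ≤ t) :
    t * cuspDiskCoeff δ a t ^ 2 + cuspDiskHeight δ a t ^ 2 = cuspRadius δ a t ^ 2 := by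
  have hm := cuspNormalizer_pos ha ht
  have hsum : t + cuspNormalizer a t ≠ 0 := by positivity
  simp only [cuspDiskCoeff, cuspDiskHeight, div_pow, mul_pow, Real.sq_sqrt hm.le]
  field_simp
  ring

theorem cuspDiskCoeff_pos (hδ : 0 < δ) (ha : a ≠ 0) (ha1 : a ^ 2 < 1) (ht0 : 0 ≤ t)
    (ht1 : t ≤ 1) : 0 < cuspDiskCoeff δ a t := by
  have hm := cuspNormalizer_pos ha ht0
  have hR := one_le_cuspRadius hδ ha1 ht1
  unfold cuspDiskCoeff
  positivity

theorem cuspDiskCoeff_of_sq_le (ha : a ≠ 0) (h : a ^ 2 ≤ t) :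
    cuspDiskCoeff δ a t = cuspRadius δ a t / √t := by
  have ht : 0 < t := (by positivity : 0 < a ^ 2).trans_le h
  rw [cuspDiskCoeff, cuspNormalizer_of_sq_le h,
    div_eq_div_iff (by positivity) (Real.sqrt_pos.2 ht).ne']
  linear_combination (2 * cuspRadius δ a t) * Real.mul_self_sqrt ht.le

theorem cuspDiskHeight_of_sq_le (h : a ^ 2 ≤ t) : cuspDiskHeight δ a t = 0 := by
  rw [cuspDiskHeight, cuspNormalizer_of_sq_le h, sub_self, mul_zero, zero_div]

theorem contDiffAt_cuspDiskCoeff (ha : a ≠ 0) (ht : 0 ≤ t) {n : ℕ∞} :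
    ContDiffAt ℝ n (cuspDiskCoeff δ a) t := by
  have hm := cuspNormalizer_pos ha ht
  have hN : ContDiffAt ℝ n (cuspNormalizer a) t := contDiff_cuspNormalizer.contDiffAt
  exact ((contDiffAt_const.mul contDiff_cuspRadius.contDiffAt).mul (hN.sqrt hm.ne')).div
    (contDiffAt_id.add hN) (add_pos_of_nonneg_of_pos ht hm).ne'

theorem contDiffAt_cuspDiskHeight (ha : a ≠ 0) (ht : 0 ≤ t) {n : ℕ∞} :
    ContDiffAt ℝ n (cuspDiskHeight δ a) t := by
  have hm := cuspNormalizer_pos ha ht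
  have hN : ContDiffAt ℝ n (cuspNormalizer a) t := contDiff_cuspNormalizer.contDiffAt
  exact (contDiff_cuspRadius.contDiffAt.mul (contDiffAt_id.sub hN)).div
    (contDiffAt_id.add hN) (add_pos_of_nonneg_of_pos ht hm).ne'

/-- `cuspDisk δ a v = R • S (v / √m)`, where `S w = ((2 / (1 + ‖w‖²)) • w, (‖w‖² - 1) / (‖w‖² + 1))`
is the inverse stereographic projection from the north pole, `R = cuspRadius δ a ‖v‖²` and
`m = cuspNormalizer a ‖v‖²`. -/
def cuspDisk (δ a : ℝ) : X → X × ℝ := radialMap (cuspDiskCoeff δ a) (cuspDiskHeight δ a)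

theorem contDiff_cuspDisk (ha : a ≠ 0) {n : ℕ∞} :
    ContDiff ℝ n (cuspDisk δ a : X → X × ℝ) :=
  contDiff_radialMap (fun _ ht => contDiffAt_cuspDiskCoeff ha ht)
    (fun _ ht => contDiffAt_cuspDiskHeight ha ht)

theorem sq_norm_cuspDisk (ha : a ≠ 0) (v : X) :
    ‖(cuspDisk δ a v).1‖ ^ 2 + (cuspDisk δ a v).2 ^ 2 = cuspRadius δ a (‖v‖ ^ 2) ^ 2 := by
  rw [cuspDisk, sq_norm_radialMap,
    mul_sq_cuspDiskCoeff_add_sq_cuspDiskHeight ha (by positivity)]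

theorem injOn_cuspDisk (hδ : 0 < δ) (ha : a ≠ 0) (ha1 : a ^ 2 < 1) :
    InjOn (cuspDisk δ a : X → X × ℝ) (closedBall 0 1) := by
  refine (injOn_radialMap (s := Icc 0 1)
    (fun t ht => (cuspDiskCoeff_pos hδ ha ha1 ht.1 ht.2).ne') ?_).mono fun v hv => ?_
  · intro s hs t ht hst
    simp only [mul_sq_cuspDiskCoeff_add_sq_cuspDiskHeight ha hs.1,
      mul_sq_cuspDiskCoeff_add_sq_cuspDiskHeight ha ht.1] at hst
    have hR := ((pow_left_inj₀ (zero_le_one.trans (one_le_cuspRadius hδ ha1 hs.2))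
      (zero_le_one.trans (one_le_cuspRadius hδ ha1 ht.2)) two_ne_zero).1 hst)
    exact (cuspRadius_strictAnti hδ ha1).injective hR
  · have hv1 : ‖v‖ ≤ 1 := mem_closedBall_zero_iff.1 hv
    exact ⟨by positivity, by nlinarith [norm_nonneg v]⟩

theorem injective_fderiv_cuspDisk (hδ : 0 < δ) (ha : a ≠ 0) (ha1 : a ^ 2 < 1) {v : X}
    (hv : ‖v‖ ≤ 1) : Injective (fderiv ℝ (cuspDisk δ a : X → X × ℝ) v) := by
  have ht0 : 0 ≤ ‖v‖ ^ 2 := by positivity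
  have ht1 : ‖v‖ ^ 2 ≤ 1 := by nlinarith [norm_nonneg v]
  have hA := ((contDiffAt_cuspDiskCoeff (δ := δ) ha ht0 (n := 1)).differentiableAt
    one_ne_zero).hasDerivAt
  have hB := ((contDiffAt_cuspDiskHeight (δ := δ) ha ht0 (n := 1)).differentiableAt
    one_ne_zero).hasDerivAt
  have hApos := cuspDiskCoeff_pos hδ ha ha1 ht0 ht1
  refine injective_fderiv_radialMap hA hB hApos.ne' ?_
  rcases ht0.eq_or_lt with ht | ht
  · left; simpa [← ht] using hApos.ne'
  have hR := (hasDerivAt_cuspRadius (δ := δ) (a := a) (t := ‖v‖ ^ 2)).differentiableAt.hasDerivAt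
  refine radial_regular_of_mul_sq_add_sq_eventuallyEq hA hB hR
    (eventually_gt_nhds ht |>.mono fun s hs =>
      mul_sq_cuspDiskCoeff_add_sq_cuspDiskHeight ha hs.le) ?_
  exact (mul_neg_of_pos_of_neg (one_pos.trans_le (one_le_cuspRadius hδ ha1 ht1))
    (deriv_cuspRadius_neg hδ ha1)).ne

theorem cuspDisk_of_le_norm (ha : 0 < a) {v : X} (hv : a ≤ ‖v‖) :
    cuspDisk δ a v = ((cuspRadius δ a (‖v‖ ^ 2) / ‖v‖) • v, 0) := by
  have h : a ^ 2 ≤ ‖v‖ ^ 2 := by gcongr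
  rw [cuspDisk, radialMap, cuspDiskCoeff_of_sq_le ha.ne' h, cuspDiskHeight_of_sq_le h,
    Real.sqrt_sq (norm_nonneg v)]

theorem image_cuspDisk_sphere (ha : 0 < a) (ha1 : a < 1) :
    cuspDisk δ a '' sphere (0 : X) 1 = {p : X × ℝ | ‖p.1‖ = 1 ∧ p.2 = 0} := by
  have heq : EqOn (cuspDisk δ a) (fun v : X => (v, 0)) (sphere 0 1) := fun v hv => by
    rw [mem_sphere_zero_iff_norm] at hv
    rw [cuspDisk_of_le_norm ha (hv ▸ ha1.le), hv, one_pow,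
      cuspRadius_one (by nlinarith), div_one, one_smul]
  rw [heq.image_eq]
  ext ⟨y, z⟩
  simp [eq_comm]

theorem image_cuspDisk_annulus (hδ : 0 < δ) (ha : 0 < a) (ha1 : a < 1) :
    cuspDisk δ a '' {v : X | a ≤ ‖v‖ ∧ ‖v‖ ≤ 1} =
      {p : X × ℝ | p.2 = 0 ∧ 1 ≤ ‖p.1‖ ∧ ‖p.1‖ ≤ 1 + δ} := by
  have ha1' : a ^ 2 < 1 := by nlinarith
  set g : ℝ → ℝ := fun ρ => cuspRadius δ a (ρ ^ 2)
  have heq : EqOn (cuspDisk δ a) (fun v : X => ((g ‖v‖ / ‖v‖) • v, 0))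
      {v | a ≤ ‖v‖ ∧ ‖v‖ ≤ 1} := fun v hv => cuspDisk_of_le_norm ha hv.1
  have hanti : AntitoneOn g (Icc a 1) := fun ρ hρ σ hσ hρσ =>
    (cuspRadius_strictAnti hδ ha1').antitone (by gcongr; linarith [hρ.1])
  have hg : ContinuousOn g (Icc a 1) := (contDiff_cuspRadius (n := 0).continuous.comp
    (continuous_pow 2)).continuousOn
  rw [heq.image_eq, ← image_image (fun y => (y, (0 : ℝ))),
    image_smul_div_norm_annulus ha ha1.le hg hanti (by simp [g, cuspRadius_one ha1'])]
  ext ⟨y, z⟩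
  simp [g, cuspRadius_one ha1', cuspRadius_sq_self, eq_comm, and_comm]

end CuspDisk

theorem exists_cusp_surgery_disk (n : ℕ)
    (U : Set (EuclideanSpace ℝ (Fin (n - 1)) × ℝ)) (hU : IsOpen U)
    (hSU : {p : EuclideanSpace ℝ (Fin (n - 1)) × ℝ | ‖p.1‖^2 + p.2^2 = 1} ⊆ U) :
    ∃ δ : ℝ, 0 < δ ∧ δ < 1 ∧
      ∃ h : EuclideanSpace ℝ (Fin (n - 1)) → EuclideanSpace ℝ (Fin (n - 1)) × ℝ,
        ContDiff ℝ (⊤ : ℕ∞) h ∧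
        Set.InjOn h (closedBall 0 1) ∧
        (∀ v ∈ closedBall (0 : EuclideanSpace ℝ (Fin (n - 1))) 1,
          Function.Injective ⇑(fderiv ℝ h v)) ∧
        h '' closedBall 0 1 ⊆ U ∧
        h '' sphere 0 1 =
          {p : EuclideanSpace ℝ (Fin (n - 1)) × ℝ | ‖p.1‖ = 1 ∧ p.2 = 0} ∧
        h '' {v : EuclideanSpace ℝ (Fin (n - 1)) | 1 - δ ≤ ‖v‖ ∧ ‖v‖ ≤ 1} =
          {p : EuclideanSpace ℝ (Fin (n - 1)) × ℝ |
            p.2 = 0 ∧ 1 ≤ ‖p.1‖ ∧ ‖p.1‖ ≤ 1 + δ} ∧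
        (∀ v : EuclideanSpace ℝ (Fin (n - 1)), ‖v‖ < 1 →
          ‖(h v).1‖^2 + (h v).2^2 ≠ 1) := by
  obtain ⟨ε, hε, hεU⟩ := exists_pos_forall_mem_of_unitSphere_subset hU hSU
  set δ := min (ε / 2) (1 / 2)
  have hδ : 0 < δ := by positivity
  have hδε : 2 * δ ≤ ε := by linarith [min_le_left (ε / 2) (1 / 2)]
  have ha : 0 < 1 - δ := by linarith [min_le_right (ε / 2) (1 / 2)]
  have ha1 : 1 - δ < 1 := by linarith
  have ha1' : (1 - δ) ^ 2 < 1 := by nlinarith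
  refine ⟨δ, hδ, by linarith, cuspDisk δ (1 - δ), contDiff_cuspDisk ha.ne',
    injOn_cuspDisk hδ ha.ne' ha1',
    fun v hv => injective_fderiv_cuspDisk hδ ha.ne' ha1' (mem_closedBall_zero_iff.1 hv), ?_,
    image_cuspDisk_sphere ha ha1, image_cuspDisk_annulus hδ ha ha1, fun v hv => ?_⟩
  · rintro _ ⟨v, hv, rfl⟩
    have ht : ‖v‖ ^ 2 ≤ 1 := by nlinarith [norm_nonneg v, mem_closedBall_zero_iff.1 hv]
    have hR : cuspRadius δ (1 - δ) (‖v‖ ^ 2) < 1 + 2 * δ := cuspRadius_lt hδ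
    exact hεU _ _ (one_le_cuspRadius hδ ha1' ht) (by linarith) (sq_norm_cuspDisk ha.ne' v)
  · have ht : ‖v‖ ^ 2 < 1 := by nlinarith [norm_nonneg v]
    rw [sq_norm_cuspDisk ha.ne' v]
    exact (one_lt_pow₀ (one_lt_cuspRadius hδ ha1' ht) two_ne_zero).ne'
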